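/- Let T be a monad whose Kleisli category Kl(T) has zero morphisms, and let F̄ be a lifting to Kl(T) of a functor F : C → C. Then the functor F̄_τ = F̄ + Id on Kl(T) is a monad with unit e'_X = ι² : X ⊸ F̄X + X and multiplication m'_X = [ι¹, id] ∘ (F̄([0,id]) + id) : F̄(F̄+Id)X + (F̄+Id)X ⊸ F̄X + X. -/

import Mathlib

/-!
Writing `m'_X = [F̄[0,id] ≫ ι¹, id]`, every law is checked on the two summands of its domain.
On the second summand all the maps involved are identities or coprojections; on the first, after
merging the maps under `F̄`, the law becomes an equation between maps out of a coproduct that holds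
because zero morphisms absorb composition, e.g. `(F̄f + f) ≫ [0,id] = [0,id] ≫ f`.
-/

open CategoryTheory CategoryTheory.Limits

variable {C : Type*} [Category C] (T : Monad C)
  [HasBinaryCoproducts (Kleisli T)] [HasZeroMorphisms (Kleisli T)]

/-- The functor `F̄_τ = F̄ + Id` on `Kl(T)`. -/
@[simps]
noncomputable def Ftau (F' : Kleisli T ⥤ Kleisli T) : Kleisli T ⥤ Kleisli T where
  obj X := F'.obj X ⨿ X
  map f := coprod.map (F'.map f) f

/-- The unit `e'_X = ι²`. -/
noncomputable def FtauUnit (F' : Kleisli T ⥤ Kleisli T) (X : Kleisli T) : X ⟶ (Ftau T F').obj X :=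
  coprod.inr

/-- The multiplication `m'_X = [ι¹, id] ∘ (F̄([0,id]) + id)`. -/
noncomputable def FtauMul (F' : Kleisli T ⥤ Kleisli T) (X : Kleisli T) :
    (Ftau T F').obj ((Ftau T F').obj X) ⟶ (Ftau T F').obj X :=
  coprod.map (F'.map (coprod.desc 0 (𝟙 X))) (𝟙 ((Ftau T F').obj X)) ≫
    coprod.desc coprod.inl (𝟙 ((Ftau T F').obj X))

section CoprodId

variable {D : Type*} [Category D] [HasBinaryCoproducts D] [HasZeroMorphisms D]

attribute [local simp] coprod.inl_desc coprod.inr_desc coprod.inl_desc_assoc coprod.inr_desc_assoc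

variable (G : D ⥤ D)

/-- `FtauMul`, for an arbitrary endofunctor `G` in place of `F̄`. -/
noncomputable def coprodIdMul (X : D) : G.obj (G.obj X ⨿ X) ⨿ (G.obj X ⨿ X) ⟶ G.obj X ⨿ X :=
  coprod.map (G.map (coprod.desc 0 (𝟙 X))) (𝟙 (G.obj X ⨿ X)) ≫
    coprod.desc coprod.inl (𝟙 (G.obj X ⨿ X))

theorem coprodIdMul_eq_desc (X : D) :
    coprodIdMul G X = coprod.desc (G.map (coprod.desc 0 (𝟙 X)) ≫ coprod.inl) (𝟙 _) := by
  simp [coprodIdMul]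

theorem coprodIdMul_naturality {X Y : D} (f : X ⟶ Y) :
    coprod.map (G.map (coprod.map (G.map f) f)) (coprod.map (G.map f) f) ≫ coprodIdMul G Y =
      coprodIdMul G X ≫ coprod.map (G.map f) f := by
  apply coprod.hom_ext
  · simp [coprodIdMul_eq_desc, ← G.map_comp_assoc]
  · simp [coprodIdMul_eq_desc]

theorem inr_coprodIdMul (X : D) : coprod.inr ≫ coprodIdMul G X = 𝟙 (G.obj X ⨿ X) := by
  simp [coprodIdMul_eq_desc]

theorem map_inr_coprodIdMul (X : D) :
    coprod.map (G.map coprod.inr) coprod.inr ≫ coprodIdMul G X = 𝟙 (G.obj X ⨿ X) := by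
  apply coprod.hom_ext
  · simp [coprodIdMul_eq_desc, ← G.map_comp_assoc]
  · simp [coprodIdMul_eq_desc]

theorem coprodIdMul_assoc (X : D) :
    coprod.map (G.map (coprodIdMul G X)) (coprodIdMul G X) ≫ coprodIdMul G X =
      coprodIdMul G (G.obj X ⨿ X) ≫ coprodIdMul G X := by
  apply coprod.hom_ext
  · simp [coprodIdMul_eq_desc, ← G.map_comp_assoc]
  · simp [coprodIdMul_eq_desc]

end CoprodId

theorem Ftau_is_monad
    (F' : Kleisli T ⥤ Kleisli T) :
    -- naturality of `e'`
    (∀ {X Y : Kleisli T} (f : X ⟶ Y),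
      f ≫ FtauUnit T F' Y = FtauUnit T F' X ≫ (Ftau T F').map f) ∧
    -- naturality of `m'`
    (∀ {X Y : Kleisli T} (f : X ⟶ Y),
      (Ftau T F').map ((Ftau T F').map f) ≫ FtauMul T F' Y =
        FtauMul T F' X ≫ (Ftau T F').map f) ∧
    -- left unit law: `e'_{F̄_τ X} ≫ m'_X = 𝟙`
    (∀ X : Kleisli T,
      FtauUnit T F' ((Ftau T F').obj X) ≫ FtauMul T F' X = 𝟙 ((Ftau T F').obj X)) ∧
    -- right unit law: `F̄_τ(e'_X) ≫ m'_X = 𝟙`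
    (∀ X : Kleisli T,
      (Ftau T F').map (FtauUnit T F' X) ≫ FtauMul T F' X = 𝟙 ((Ftau T F').obj X)) ∧
    -- associativity: `F̄_τ(m'_X) ≫ m'_X = m'_{F̄_τ X} ≫ m'_X`
    (∀ X : Kleisli T,
      (Ftau T F').map (FtauMul T F' X) ≫ FtauMul T F' X =
        FtauMul T F' ((Ftau T F').obj X) ≫ FtauMul T F' X) := by
  exact ⟨fun f => (coprod.inr_map _ _).symm, coprodIdMul_naturality F', inr_coprodIdMul F',
    map_inr_coprodIdMul F', coprodIdMul_assoc F'⟩
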